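/- arXiv:1210.2103 — 4 statements merged into one kernel-verified Lean document; each statement's English description precedes it below -/
import Mathlib

section
/- For projections P, Q on a Hilbert space H, P⊥*Q holds if and only if π(PQ) = π(QP) and P⊤*Q, where π is the quotient map to the Calkin algebra. -/
/-!
If `PQ` is compact, so is its adjoint `QP`, and `π(PQ) = 0`. Conversely, if `π(PQ) = π(QP)` then
`PQ - (PQ)² = P(PQ - QP)Q` is compact, so `e = π(PQ)` is an idempotent in the Calkin algebra and
`‖e‖ = ‖e²‖ ≤ ‖e‖²`; with `‖e‖ < 1` this forces `e = 0`.

Compactness of the adjoint comes from the estimate `‖T x‖² ≤ ‖T†T x‖ ‖x‖`: it makes `T` map the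
unit ball to a set that is totally bounded because its image under `T†T` is.
-/

open ContinuousLinearMap

/-- Essential norm: the norm of the image of `T` in the Calkin algebra. -/
noncomputable def essNorm {H : Type*} [NormedAddCommGroup H] [InnerProductSpace ℂ H]
    [CompleteSpace H] (T : H →L[ℂ] H) : ℝ :=
  sInf {c : ℝ | ∃ K : H →L[ℂ] H, IsCompactOperator ⇑K ∧ c = ‖T + K‖}

open Filter Metric Set Topology

theorem TotallyBounded.image_of_dist_lt {X Y Z : Type*} [PseudoMetricSpace Y]
    [PseudoMetricSpace Z] {f : X → Y} {g : X → Z} {s : Set X} (hf : TotallyBounded (f '' s))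
    (hfg : ∀ ε > 0, ∃ δ > 0, ∀ x ∈ s, ∀ y ∈ s, dist (f x) (f y) < δ → dist (g x) (g y) < ε) :
    TotallyBounded (g '' s) := by
  refine Metric.totallyBounded_iff.2 fun ε hε => ?_
  obtain ⟨δ, hδ, hfgδ⟩ := hfg ε hε
  obtain ⟨u, hus, hu, hcover⟩ := finite_approx_of_totallyBounded hf δ hδ
  obtain ⟨t, hts, ht, rfl⟩ := hu.exists_subset_finite_image_eq hus
  refine ⟨g '' t, ht.image g, ?_⟩
  rintro _ ⟨x, hx, rfl⟩
  obtain ⟨_, ⟨y, hy, rfl⟩, hxy⟩ := mem_iUnion₂.1 (hcover (mem_image_of_mem f hx))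
  exact mem_iUnion₂.2 ⟨g y, mem_image_of_mem g hy, hfgδ x hx y (hts hy) hxy⟩

section Adjoint

variable {𝕜 E F : Type*} [RCLike 𝕜] [NormedAddCommGroup E] [InnerProductSpace 𝕜 E]
  [NormedAddCommGroup F] [InnerProductSpace 𝕜 F] [CompleteSpace E] [CompleteSpace F]

theorem norm_apply_sq_le_norm_adjoint_comp_self_apply_mul_norm (T : E →L[𝕜] F) (x : E) :
    ‖T x‖ ^ 2 ≤ ‖(adjoint T ∘L T) x‖ * ‖x‖ := by
  rw [apply_norm_sq_eq_inner_adjoint_left]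
  exact (RCLike.re_le_norm _).trans (norm_inner_le_norm _ _)

theorem IsCompactOperator.of_adjoint_comp_self {T : E →L[𝕜] F}
    (h : IsCompactOperator (adjoint T ∘L T)) : IsCompactOperator T := by
  set A := adjoint T ∘L T
  have hA : TotallyBounded (A '' closedBall 0 1) := by
    obtain ⟨K, hK, hAK⟩ := h.image_closedBall_subset_compact (f := (A : E →ₗ[𝕜] E)) 1
    exact hK.totallyBounded.subset hAK
  -- on the unit ball, `‖T x - T y‖ ^ 2 ≤ ‖A (x - y)‖ * ‖x - y‖ ≤ 2 * dist (A x) (A y)`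
  have hT : TotallyBounded (T '' closedBall 0 1) := by
    refine hA.image_of_dist_lt fun ε hε => ⟨ε ^ 2 / 2, by positivity, fun x hx y hy hxy => ?_⟩
    rw [mem_closedBall_zero_iff] at hx hy
    rw [dist_eq_norm, ← map_sub] at hxy ⊢
    have hxy' : ‖x - y‖ ≤ 2 := (norm_sub_le x y).trans (by linarith)
    have hTA := norm_apply_sq_le_norm_adjoint_comp_self_apply_mul_norm T (x - y)
    have hsq : ‖T (x - y)‖ ^ 2 < ε ^ 2 := by
      nlinarith [norm_nonneg (A (x - y)), norm_nonneg (x - y)]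
    exact lt_of_pow_lt_pow_left₀ 2 hε.le hsq
  exact (isCompactOperator_iff_isCompact_closure_image_closedBall (T : E →ₗ[𝕜] F) one_pos).2
    (hT.closure.isCompact_of_isClosed isClosed_closure)

theorem IsCompactOperator.adjoint {T : E →L[𝕜] F} (hT : IsCompactOperator T) :
    IsCompactOperator (adjoint T) :=
  .of_adjoint_comp_self <| by rw [adjoint_adjoint]; exact hT.comp_clm _

end Adjoint

section EssNorm

variable {H : Type*} [NormedAddCommGroup H] [InnerProductSpace ℂ H] [CompleteSpace H]

theorem essNorm_le {T K : H →L[ℂ] H} (hK : IsCompactOperator K) : essNorm T ≤ ‖T + K‖ :=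
  csInf_le ⟨0, by rintro c ⟨K, -, rfl⟩; exact norm_nonneg _⟩ ⟨K, hK, rfl⟩

theorem le_essNorm {T : H →L[ℂ] H} {r : ℝ}
    (h : ∀ K : H →L[ℂ] H, IsCompactOperator K → r ≤ ‖T + K‖) : r ≤ essNorm T :=
  le_csInf ⟨_, 0, isCompactOperator_zero, rfl⟩ fun _ ⟨K, hK, hc⟩ => hc ▸ h K hK

theorem exists_norm_add_lt_of_essNorm_lt {T : H →L[ℂ] H} {r : ℝ} (h : essNorm T < r) :
    ∃ K : H →L[ℂ] H, IsCompactOperator K ∧ ‖T + K‖ < r := by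
  by_contra! hr
  exact h.not_ge (le_essNorm hr)

theorem essNorm_nonneg (T : H →L[ℂ] H) : 0 ≤ essNorm T :=
  le_essNorm fun _ _ => norm_nonneg _

theorem essNorm_eq_zero_iff {T : H →L[ℂ] H} : essNorm T = 0 ↔ IsCompactOperator T := by
  refine ⟨fun h => isClosed_setOfPred_isCompactOperator.closure_subset ?_, fun hT => ?_⟩
  · refine Metric.mem_closure_iff.2 fun ε hε => ?_
    obtain ⟨K, hK, hTK⟩ := exists_norm_add_lt_of_essNorm_lt (h.trans_lt hε)
    exact ⟨-K, hK.neg, by rwa [dist_eq_norm, sub_neg_eq_add]⟩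
  · refine le_antisymm ?_ (essNorm_nonneg T)
    simpa using essNorm_le (T := T) (K := -T) hT.neg

theorem essNorm_le_of_isCompactOperator_sub {A B : H →L[ℂ] H} (h : IsCompactOperator (A - B)) :
    essNorm A ≤ essNorm B :=
  le_essNorm fun K hK =>
    calc essNorm A ≤ ‖A + (K - (A - B))‖ := essNorm_le (hK.sub h)
      _ = ‖B + K‖ := by rw [sub_sub_eq_add_sub, add_sub_cancel, add_comm]

theorem essNorm_eq_of_isCompactOperator_sub {A B : H →L[ℂ] H} (h : IsCompactOperator (A - B)) :
    essNorm A = essNorm B :=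
  (essNorm_le_of_isCompactOperator_sub h).antisymm
    (essNorm_le_of_isCompactOperator_sub (by simpa using h.neg))

theorem essNorm_comp_le (S T : H →L[ℂ] H) : essNorm (S ∘L T) ≤ essNorm S * essNorm T := by
  have key : ∀ ε > 0, essNorm (S ∘L T) ≤ (essNorm S + ε) * (essNorm T + ε) := fun ε hε => by
    obtain ⟨K, hK, hSK⟩ := exists_norm_add_lt_of_essNorm_lt (lt_add_of_pos_right (essNorm S) hε)
    obtain ⟨L, hL, hTL⟩ := exists_norm_add_lt_of_essNorm_lt (lt_add_of_pos_right (essNorm T) hε)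
    have hcomp : IsCompactOperator (S ∘L L + K ∘L T + K ∘L L) :=
      ((hL.clm_comp S).add (hK.comp_clm T)).add (hK.comp_clm L)
    calc essNorm (S ∘L T) ≤ ‖S ∘L T + (S ∘L L + K ∘L T + K ∘L L)‖ := essNorm_le hcomp
      _ = ‖(S + K) ∘L (T + L)‖ := by simp only [add_comp, comp_add]; abel_nf
      _ ≤ ‖S + K‖ * ‖T + L‖ := opNorm_comp_le _ _
      _ ≤ (essNorm S + ε) * (essNorm T + ε) :=
        mul_le_mul hSK.le hTL.le (norm_nonneg _) (by linarith [essNorm_nonneg S])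
  have hlim : Tendsto (fun ε => (essNorm S + ε) * (essNorm T + ε)) (𝓝[>] 0)
      (𝓝 (essNorm S * essNorm T)) :=
    tendsto_nhdsWithin_of_tendsto_nhds <|
      (show Continuous fun ε : ℝ => (essNorm S + ε) * (essNorm T + ε) by fun_prop).tendsto' _ _
        (by simp)
  exact ge_of_tendsto hlim (eventually_nhdsWithin_of_forall key)

theorem IsCompactOperator.of_comp_self_sub_of_essNorm_lt_one {E : H →L[ℂ] H}
    (hE : IsCompactOperator (E ∘L E - E)) (hlt : essNorm E < 1) : IsCompactOperator E := by
  have hle := essNorm_comp_le E E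
  rw [essNorm_eq_of_isCompactOperator_sub hE] at hle
  have hnonneg := essNorm_nonneg E
  exact essNorm_eq_zero_iff.1 (by nlinarith)

end EssNorm

/-- `P ⊥* Q` iff `π(PQ) = π(QP)` and `P ⊤* Q`. -/
theorem stmt2 {H : Type*} [NormedAddCommGroup H] [InnerProductSpace ℂ H] [CompleteSpace H]
    (P Q : H →L[ℂ] H)
    (hP2 : P ∘L P = P) (hPsa : ContinuousLinearMap.adjoint P = P)
    (hQ2 : Q ∘L Q = Q) (hQsa : ContinuousLinearMap.adjoint Q = Q) :
    IsCompactOperator ⇑(P ∘L Q) ↔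
      (IsCompactOperator ⇑(P ∘L Q - Q ∘L P) ∧ essNorm (P ∘L Q) < 1) := by
  refine ⟨fun hPQ => ⟨?_, ?_⟩, fun ⟨hcomm, hlt⟩ => ?_⟩
  · have hQP : IsCompactOperator (Q ∘L P) := by
      simpa only [adjoint_comp, hPsa, hQsa] using hPQ.adjoint
    exact hPQ.sub hQP
  · rw [essNorm_eq_zero_iff.2 hPQ]
    exact one_pos
  · have hsq : (P ∘L Q) ∘L (P ∘L Q) - P ∘L Q = -(P ∘L ((P ∘L Q - Q ∘L P) ∘L Q)) := by
      simp only [comp_sub, sub_comp, comp_assoc, hQ2]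
      rw [← comp_assoc P P Q, hP2, neg_sub]
    refine .of_comp_self_sub_of_essNorm_lt_one ?_ hlt
    rw [hsq]
    exact ((hcomm.comp_clm Q).clm_comp P).neg
end

section
/- Let v₀, …, v_{n−1} be orthonormal vectors in a Hilbert space H and P a projection on H such that v_i ⟂ P v_j for all distinct i, j < n. Then the operator norm of P composed with the orthogonal projection onto span{v₀,…,v_{n−1}} equals max_{i<n} ‖P v_i‖. -/
/-!
A star projection `P` satisfies `⟪P x, P y⟫ = ⟪x, P y⟫`, so the hypothesis says that `P` maps the
orthonormal family `vᵢ` to a pairwise orthogonal family. By Pythagoras,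
`‖P (∑ cᵢ vᵢ)‖² = ∑ |cᵢ|² ‖P vᵢ‖² ≤ (maxᵢ ‖P vᵢ‖)² ‖∑ cᵢ vᵢ‖²`, which bounds `‖P ∘ p‖` from above
since `p` is the orthogonal projection onto `span {vᵢ}`; evaluating at `vᵢ` gives the lower bound.
-/

open ContinuousLinearMap Finset
open scoped InnerProductSpace

section

variable {𝕜 E F ι : Type*} [RCLike 𝕜] [NormedAddCommGroup E] [InnerProductSpace 𝕜 E]
  [NormedAddCommGroup F] [InnerProductSpace 𝕜 F]

theorem norm_sum_smul_sq_of_pairwise_inner_eq_zero {w : ι → E}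
    (hw : Pairwise fun i j ↦ ⟪w i, w j⟫_𝕜 = 0) (c : ι → 𝕜) (s : Finset ι) :
    ‖∑ i ∈ s, c i • w i‖ ^ 2 = ∑ i ∈ s, ‖c i‖ ^ 2 * ‖w i‖ ^ 2 := by
  classical
  induction s using Finset.induction_on with
  | empty => simp
  | insert a s ha ih =>
    have horth : ⟪c a • w a, ∑ i ∈ s, c i • w i⟫_𝕜 = 0 := by
      simp only [inner_sum, inner_smul_left, inner_smul_right]
      exact sum_eq_zero fun i hi ↦ by
        rw [hw (ne_of_mem_of_not_mem hi ha).symm, mul_zero, mul_zero]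
    rw [sum_insert ha, sum_insert ha, sq,
      norm_add_sq_eq_norm_sq_add_norm_sq_of_inner_eq_zero _ _ horth, ← sq, ← sq, ih, norm_smul,
      mul_pow]

theorem norm_apply_le_of_mem_span_orthonormal [Fintype ι] {v : ι → E} (hv : Orthonormal 𝕜 v)
    (T : E →ₗ[𝕜] F) (hT : Pairwise fun i j ↦ ⟪T (v i), T (v j)⟫_𝕜 = 0) {M : ℝ} (hM0 : 0 ≤ M)
    (hM : ∀ i, ‖T (v i)‖ ≤ M) {y : E} (hy : y ∈ Submodule.span 𝕜 (Set.range v)) :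
    ‖T y‖ ≤ M * ‖y‖ := by
  obtain ⟨c, rfl⟩ := (Submodule.mem_span_range_iff_exists_fun 𝕜).mp hy
  have hTy : ‖T (∑ i, c i • v i)‖ ^ 2 = ∑ i, ‖c i‖ ^ 2 * ‖T (v i)‖ ^ 2 := by
    simp only [map_sum, map_smul]
    exact norm_sum_smul_sq_of_pairwise_inner_eq_zero hT c _
  have hy : ‖∑ i, c i • v i‖ ^ 2 = ∑ i, ‖c i‖ ^ 2 := by
    simpa [hv.1] using norm_sum_smul_sq_of_pairwise_inner_eq_zero (fun i j hij ↦ hv.2 hij) c univ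
  refine (pow_le_pow_iff_left₀ (norm_nonneg _) (by positivity) two_ne_zero).mp ?_
  calc ‖T (∑ i, c i • v i)‖ ^ 2 = ∑ i, ‖c i‖ ^ 2 * ‖T (v i)‖ ^ 2 := hTy
    _ ≤ ∑ i, ‖c i‖ ^ 2 * M ^ 2 := by gcongr with i; exact hM i
    _ = (M * ‖∑ i, c i • v i‖) ^ 2 := by rw [mul_pow, hy, mul_sum]; simp_rw [mul_comm]

theorem norm_comp_starProjection_eq_iSup [Fintype ι] {v : ι → E} (hv : Orthonormal 𝕜 v)
    {K : Submodule 𝕜 E} [K.HasOrthogonalProjection] (hK : Submodule.span 𝕜 (Set.range v) = K)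
    (T : E →L[𝕜] F) (hT : Pairwise fun i j ↦ ⟪T (v i), T (v j)⟫_𝕜 = 0) :
    ‖T ∘L K.starProjection‖ = ⨆ i, ‖T (v i)‖ := by
  have hM0 : 0 ≤ ⨆ i, ‖T (v i)‖ := Real.iSup_nonneg fun i ↦ norm_nonneg _
  have hM : ∀ i, ‖T (v i)‖ ≤ ⨆ i, ‖T (v i)‖ := le_ciSup (Set.finite_range _).bddAbove
  apply le_antisymm
  · refine opNorm_le_bound _ hM0 fun x ↦ ?_
    have hx : K.starProjection x ∈ Submodule.span 𝕜 (Set.range v) := by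
      rw [hK]; exact K.starProjection_apply_mem x
    calc ‖T (K.starProjection x)‖
        ≤ (⨆ i, ‖T (v i)‖) * ‖K.starProjection x‖ :=
          norm_apply_le_of_mem_span_orthonormal hv T.toLinearMap hT hM0 hM hx
      _ ≤ (⨆ i, ‖T (v i)‖) * ‖x‖ := by gcongr; exact K.norm_starProjection_apply_le x
  · refine Real.iSup_le (fun i ↦ ?_) (norm_nonneg _)
    have hvK : v i ∈ K := hK ▸ Submodule.subset_span ⟨i, rfl⟩
    calc ‖T (v i)‖ = ‖(T ∘L K.starProjection) (v i)‖ := by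
          rw [comp_apply, K.starProjection_eq_self_iff.mpr hvK]
      _ ≤ ‖T ∘L K.starProjection‖ * ‖v i‖ := le_opNorm _ _
      _ = ‖T ∘L K.starProjection‖ := by rw [hv.1 i, mul_one]

theorem IsStarProjection.inner_apply_apply [CompleteSpace E] {P : E →L[𝕜] E}
    (hP : IsStarProjection P) (x y : E) : ⟪P x, P y⟫_𝕜 = ⟪x, P y⟫_𝕜 := by
  rw [← adjoint_inner_right, ← star_eq_adjoint, hP.isSelfAdjoint.star_eq, ← comp_apply,
    ← ContinuousLinearMap.mul_def, hP.isIdempotentElem.eq]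

end

theorem stmt4_general {H : Type*} [NormedAddCommGroup H] [InnerProductSpace ℂ H] [CompleteSpace H]
    {n : ℕ} (v : Fin n → H) (hv : Orthonormal ℂ v)
    (P : H →L[ℂ] H) (hP2 : P ∘L P = P) (hPsa : ContinuousLinearMap.adjoint P = P)
    (horth : ∀ i j : Fin n, i ≠ j → inner ℂ (v i) (P (v j)) = (0 : ℂ))
    (p : H →L[ℂ] H) (hp2 : p ∘L p = p) (hpsa : ContinuousLinearMap.adjoint p = p)
    (hrange : LinearMap.range (p : H →ₗ[ℂ] H) = Submodule.span ℂ (Set.range v)) :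
    ‖P ∘L p‖ = ⨆ i : Fin n, ‖P (v i)‖ := by
  set K := Submodule.span ℂ (Set.range v)
  have : FiniteDimensional ℂ K := .span_of_finite ℂ (Set.finite_range v)
  have hp : p = K.starProjection :=
    IsStarProjection.ext ⟨hp2, hpsa⟩ isStarProjection_starProjection
      (by rw [K.range_starProjection, hrange])
  have hP : IsStarProjection P := ⟨hP2, hPsa⟩
  rw [hp]
  exact norm_comp_starProjection_eq_iSup hv rfl P fun i j hij ↦
    (hP.inner_apply_apply _ _).trans (horth i j hij)

/-- If `v₀,…,v_{n-1}` are orthonormal and `P` is a projection with `v i ⟂ P (v j)` for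
`i ≠ j`, then the norm of `P` composed with the orthogonal projection `p` onto
`span {v i}` equals `max_i ‖P (v i)‖`. -/
theorem stmt4 {H : Type*} [NormedAddCommGroup H] [InnerProductSpace ℂ H] [CompleteSpace H]
    {n : ℕ} (hn : 0 < n) (v : Fin n → H) (hv : Orthonormal ℂ v)
    (P : H →L[ℂ] H) (hP2 : P ∘L P = P) (hPsa : ContinuousLinearMap.adjoint P = P)
    (horth : ∀ i j : Fin n, i ≠ j → inner ℂ (v i) (P (v j)) = (0 : ℂ))
    (p : H →L[ℂ] H) (hp2 : p ∘L p = p) (hpsa : ContinuousLinearMap.adjoint p = p)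
    (hrange : LinearMap.range (p : H →ₗ[ℂ] H) = Submodule.span ℂ (Set.range v)) :
    ‖P ∘L p‖ = ⨆ i : Fin n, ‖P (v i)‖ :=
  stmt4_general v hv P hP2 hPsa horth p hp2 hpsa hrange
end

section
/- There exists a family (X_x) indexed by finite subsets x of ω₁, with each X_x an infinite subset of ℕ, such that: X_∅ = ℕ; for every nonempty finite x ⊆ ω₁, X_x ⊆ X_{x \ {max x}}; and whenever x ≠ y are nonempty finite subsets of ω₁ with max x = max y, X_x ∩ X_y = ∅. -/
/-!
Recursion on `max x`: once `X_y` is known for the countably many finite `y` below `α`, the sets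
`X_{y ∪ {α}}` are chosen as pairwise disjoint infinite subsets of the `X_y`. Such a disjoint
refinement of countably many infinite subsets of `ℕ` exists because, along an enumeration in
which every set recurs infinitely often, one can pick a strictly increasing sequence whose
`n`-th term lies in the `n`-th set; the terms at the positions of a given set form its
infinite subset, and these subsets are disjoint since the sequence is injective.
-/

open Set Function

lemma exists_strictMono_forall_mem {R : ℕ → Set ℕ} (hR : ∀ n, (R n).Infinite) :
    ∃ f : ℕ → ℕ, StrictMono f ∧ ∀ n, f n ∈ R n := by
  choose next next_mem lt_next using fun n a => (hR n).exists_gt a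
  let f : ℕ → ℕ := fun n => Nat.rec (next 0 0) (fun m b => next (m + 1) b) n
  refine ⟨f, strictMono_nat_of_lt_succ fun n => lt_next (n + 1) (f n), fun n => ?_⟩
  cases n with
  | zero => exact next_mem 0 0
  | succ n => exact next_mem (n + 1) (f n)

lemma exists_injective_forall_mem {J : Type*} [Countable J] {Q : J → Set ℕ}
    (hQ : ∀ j, (Q j).Infinite) : ∃ g : J → ℕ, Injective g ∧ ∀ j, g j ∈ Q j := by
  cases isEmpty_or_nonempty J
  · exact ⟨isEmptyElim, injective_of_subsingleton _, isEmptyElim⟩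
  obtain ⟨e, he⟩ := exists_surjective_nat J
  obtain ⟨f, hf, hfQ⟩ := exists_strictMono_forall_mem fun n => hQ (e n)
  refine ⟨f ∘ surjInv he, hf.injective.comp (injective_surjInv he), fun j => ?_⟩
  simpa only [comp_apply, surjInv_eq he j] using hfQ (surjInv he j)

lemma exists_pairwise_disjoint_subset_infinite {ι : Type*} [Countable ι] (P : ι → Set ℕ) :
    ∃ A : ι → Set ℕ, Pairwise (Disjoint on A) ∧ (∀ i, A i ⊆ P i) ∧
      ∀ i, (P i).Infinite → (A i).Infinite := by
  obtain ⟨g, hg, hgP⟩ := exists_injective_forall_mem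
    (Q := fun j : {i // (P i).Infinite} × ℕ => P j.1) fun j => j.1.2
  refine ⟨fun i => g '' {j | j.1.1 = i}, fun i i' hii' => ?_, fun i => ?_, fun i hi => ?_⟩
  · refine (disjoint_image_iff hg).2 (disjoint_left.2 fun j hj hj' => hii' ?_)
    exact hj.symm.trans hj'
  · rintro _ ⟨j, rfl, rfl⟩
    exact hgP j
  · have hinj : Injective fun k => g (⟨i, hi⟩, k) := fun k k' hkk' => congrArg Prod.snd (hg hkk')
    exact infinite_of_injective_forall_mem hinj fun k => ⟨_, rfl, rfl⟩

namespace Finset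

variable {ι : Type*} [LinearOrder ι]

lemma max_lt_max_of_forall_lt_max' {s t : Finset ι} (ht : t.Nonempty)
    (h : ∀ b ∈ s, b < t.max' ht) : s.max < t.max := by
  rw [← coe_max' ht]
  exact (Finset.sup_lt_iff (WithBot.bot_lt_coe _)).2 fun b hb => WithBot.coe_lt_coe.2 (h b hb)

lemma forall_mem_erase_max'_lt {s : Finset ι} (hs : s.Nonempty) :
    ∀ b ∈ s.erase (s.max' hs), b < s.max' hs := fun _ hb =>
  (s.le_max' _ (mem_of_mem_erase hb)).lt_of_ne (ne_of_mem_erase hb)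

lemma eq_of_erase_eq {s t : Finset ι} {a : ι} (hs : a ∈ s) (ht : a ∈ t)
    (h : s.erase a = t.erase a) : s = t := by
  rw [← insert_erase hs, ← insert_erase ht, h]

lemma countable_forall_mem_lt {a : ι} (ha : (Set.Iio a).Countable) :
    Countable {s : Finset ι // ∀ b ∈ s, b < a} :=
  ((Set.countable_ofPred_finite_subset ha).preimage coe_injective |>.mono
    fun s hs => show _ ∧ _ from ⟨s.finite_toSet, hs⟩).to_subtype

end Finset

section NestedFamily

variable {ι : Type*} [LinearOrder ι] (hι : ∀ a : ι, (Iio a).Countable)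

noncomputable def refineBelow (a : ι) (P : {s : Finset ι // ∀ b ∈ s, b < a} → Set ℕ) :
    {s : Finset ι // ∀ b ∈ s, b < a} → Set ℕ :=
  haveI := Finset.countable_forall_mem_lt (hι a)
  (exists_pairwise_disjoint_subset_infinite P).choose

lemma refineBelow_spec (a : ι) (P : {s : Finset ι // ∀ b ∈ s, b < a} → Set ℕ) :
    Pairwise (Disjoint on refineBelow hι a P) ∧ (∀ s, refineBelow hι a P s ⊆ P s) ∧
      ∀ s, (P s).Infinite → (refineBelow hι a P s).Infinite :=
  haveI := Finset.countable_forall_mem_lt (hι a)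
  (exists_pairwise_disjoint_subset_infinite P).choose_spec

variable [WellFoundedLT ι]

lemma wellFounded_max_lt : WellFounded ((· < ·) on (Finset.max : Finset ι → WithBot ι)) :=
  wellFounded_lt.onFun

noncomputable def nestedFamily : Finset ι → Set ℕ :=
  wellFounded_max_lt.fix fun x IH =>
    if hx : x.Nonempty then
      refineBelow hι (x.max' hx)
        (fun s => IH s.1 (Finset.max_lt_max_of_forall_lt_max' hx s.2))
        ⟨x.erase (x.max' hx), Finset.forall_mem_erase_max'_lt hx⟩
    else univ

lemma nestedFamily_empty : nestedFamily hι ∅ = univ := by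
  rw [nestedFamily, wellFounded_max_lt.fix_eq, dif_neg Finset.not_nonempty_empty]

lemma nestedFamily_of_max'_eq {x : Finset ι} {a : ι} (hx : x.Nonempty) (ha : x.max' hx = a) :
    nestedFamily hι x = refineBelow hι a (fun s => nestedFamily hι s.1)
      ⟨x.erase a, ha ▸ Finset.forall_mem_erase_max'_lt hx⟩ := by
  subst ha
  rw [nestedFamily, wellFounded_max_lt.fix_eq, dif_pos hx]

lemma nestedFamily_subset {x : Finset ι} (hx : x.Nonempty) :
    nestedFamily hι x ⊆ nestedFamily hι (x.erase (x.max' hx)) := by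
  rw [nestedFamily_of_max'_eq hι hx rfl]
  exact (refineBelow_spec hι _ _).2.1 _

lemma nestedFamily_infinite (x : Finset ι) : (nestedFamily hι x).Infinite := by
  refine wellFounded_max_lt.induction (C := fun x => (nestedFamily hι x).Infinite) x fun x IH => ?_
  by_cases hx : x.Nonempty
  · rw [nestedFamily_of_max'_eq hι hx rfl]
    refine (refineBelow_spec hι _ _).2.2 _ (IH _ ?_)
    exact Finset.max_lt_max_of_forall_lt_max' hx (Finset.forall_mem_erase_max'_lt hx)
  · rw [Finset.not_nonempty_iff_eq_empty.1 hx, nestedFamily_empty]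
    exact infinite_univ

lemma disjoint_nestedFamily {x y : Finset ι} (hx : x.Nonempty) (hy : y.Nonempty) (hxy : x ≠ y)
    (hmax : x.max' hx = y.max' hy) : Disjoint (nestedFamily hι x) (nestedFamily hι y) := by
  rw [nestedFamily_of_max'_eq hι hx rfl, nestedFamily_of_max'_eq hι hy hmax.symm]
  refine (refineBelow_spec hι _ _).1 fun h => hxy ?_
  exact Finset.eq_of_erase_eq (x.max'_mem hx) (hmax ▸ y.max'_mem hy) (congrArg Subtype.val h)

end NestedFamily

lemma Ordinal.countable_Iio_of_lt_ord_aleph_one {o : Ordinal} (ho : o < (Cardinal.aleph 1).ord) :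
    (Iio o).Countable := by
  rw [← Cardinal.le_aleph0_iff_set_countable, Cardinal.mk_Iio_ordinal, Cardinal.lift_le_aleph0,
    ← Cardinal.lt_aleph_one_iff]
  exact Cardinal.lt_ord.1 ho

/-- There is a family `(X_x)` indexed by finite subsets of `ω₁`, each an infinite subset of
`ℕ`, with `X_∅ = ℕ`, `X_x ⊆ X_{x \ {max x}}` for nonempty `x`, and `X_x ∩ X_y = ∅`
whenever `x ≠ y` have the same maximum. -/
theorem stmt8 :
    ∃ X : Finset {o : Ordinal // o < (Cardinal.aleph 1).ord} → Set ℕ,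
      X ∅ = Set.univ ∧
      (∀ x, (X x).Infinite) ∧
      (∀ (x) (hx : x.Nonempty), X x ⊆ X (x.erase (x.max' hx))) ∧
      (∀ (x y) (hx : x.Nonempty) (hy : y.Nonempty),
        x ≠ y → x.max' hx = y.max' hy → X x ∩ X y = ∅) := by
  have hω₁ (a : {o : Ordinal // o < (Cardinal.aleph 1).ord}) : (Iio a).Countable :=
    ((Ordinal.countable_Iio_of_lt_ord_aleph_one a.2).preimage Subtype.val_injective).mono
      fun _ hb => hb
  exact ⟨nestedFamily hω₁, nestedFamily_empty hω₁, nestedFamily_infinite hω₁,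
    fun _ hx => nestedFamily_subset hω₁ hx,
    fun _ _ hx hy hxy hmax => (disjoint_nestedFamily hω₁ hx hy hxy hmax).inter_eq⟩
end

section
/- The pseudo-disjointness number 𝔭([0,1]^ω) equals ℵ₁: there exists a family (f_ξ)_{ξ<ω₁} of functions f_ξ : ℕ → [0,∞) such that no single function f : ℕ → [0,1] is lim-inf disjoint from all f_ξ, i.e., for every f : ℕ → [0,1] there exists ξ < ω₁ with liminf_n |f(n) − f_ξ(n)| = 0. -/
/-!
Fix an injection `e` of `ω₁` into `ℝ` and let `n ∈ ℕ` code a triple `(T, m, N)` with `T` a finite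
set of rationals; put `F ξ n = #{q ∈ T | q < e ξ} / m`. If `f : ℕ → [0,1]` were lim-inf disjoint
from every `F ξ`, each `ξ` would come with `k, N` such that `|f - F ξ| > 1/(k+1)` beyond `N`.
Uncountably many `ξ` share the same `(k, N)`; choose `k + 1` of them and rationals `T` interleaving
their values under `e`. At the code of `(T, k + 1, N)` these `F ξ` take all the values
`0, 1/(k+1), …, k/(k+1)`, and `f` lies within `1/(k+1)` of one of them.
-/

open Filter Finset

theorem exists_infinite_fiber_of_uncountable {ι α : Type*} [Uncountable ι] [Countable α]
    (K : ι → α) : ∃ a, {ξ | K ξ = a}.Infinite := by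
  by_contra! hfin
  have : ∀ a, Finite {ξ // K ξ = a} := fun a => (hfin a).to_subtype
  exact not_countable ((Equiv.sigmaFiberEquiv K).countable_iff.mp inferInstance)

lemma exists_one_div_lt_of_liminf_ne_zero {u : ℕ → ℝ} (hu : ∀ n, 0 ≤ u n)
    (h : liminf (fun n => (u n : EReal)) atTop ≠ 0) :
    ∃ k N : ℕ, ∀ n ≥ N, 1 / ((k : ℝ) + 1) < u n := by
  have hpos : (0 : EReal) < liminf (fun n => (u n : EReal)) atTop :=
    (le_liminf_of_le (by isBoundedDefault)
      (.of_forall fun n => EReal.coe_nonneg.mpr (hu n))).lt_of_ne' h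
  obtain ⟨ε, hε, hεu⟩ := EReal.exists_between_coe_real hpos
  obtain ⟨N, hN⟩ := eventually_atTop.mp (eventually_lt_of_lt_liminf hεu)
  obtain ⟨k, hk⟩ := exists_nat_one_div_lt (EReal.coe_pos.mp hε)
  exact ⟨k, N, fun n hn => hk.trans (EReal.coe_lt_coe_iff.mp (hN n hn))⟩

lemma exists_abs_sub_div_le {t : ℝ} (ht : t ∈ Set.Icc (0 : ℝ) 1) {m : ℕ} (hm : 0 < m) :
    ∃ i < m, |t - i / m| ≤ 1 / m := by
  have hm' : (0 : ℝ) < m := by exact_mod_cast hm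
  rcases ht.2.lt_or_eq with ht1 | rfl
  · have htm : 0 ≤ t * m := mul_nonneg ht.1 hm'.le
    refine ⟨⌊t * m⌋₊, (Nat.floor_lt htm).mpr (by nlinarith), ?_⟩
    have : t - ⌊t * m⌋₊ / m = (t * m - ⌊t * m⌋₊) / m := by field_simp
    rw [this, abs_div, abs_of_pos hm']
    gcongr
    rw [abs_le]
    constructor <;> linarith [Nat.floor_le htm, Nat.lt_floor_add_one (t * m)]
  · refine ⟨m - 1, by omega, ?_⟩
    rw [Nat.cast_sub hm, sub_div, div_self hm'.ne']
    simp

def RealizesGrids {ι : Type*} (F : ι → ℕ → ℝ) : Prop :=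
  ∀ (t : Finset ι) (N : ℕ), ∃ p ≥ N, ∀ i < #t, ∃ ξ ∈ t, F ξ p = i / #t

theorem RealizesGrids.exists_liminf_abs_sub_eq_zero {ι : Type*} [Uncountable ι]
    {F : ι → ℕ → ℝ} (hF : RealizesGrids F) {f : ℕ → ℝ} (hf : ∀ n, f n ∈ Set.Icc (0 : ℝ) 1) :
    ∃ ξ, liminf (fun n => ((|f n - F ξ n| : ℝ) : EReal)) atTop = 0 := by
  by_contra! hsep
  choose k N hkN using fun ξ =>
    exists_one_div_lt_of_liminf_ne_zero (fun n => abs_nonneg (f n - F ξ n)) (hsep ξ)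
  obtain ⟨⟨k₀, N₀⟩, hfiber⟩ := exists_infinite_fiber_of_uncountable fun ξ => (k ξ, N ξ)
  obtain ⟨t, hts, htcard⟩ := hfiber.exists_subset_card_eq (k₀ + 1)
  obtain ⟨p, hpN, hgrid⟩ := hF t N₀
  obtain ⟨i, hi, hfi⟩ := exists_abs_sub_div_le (hf p) (m := #t) (by omega)
  obtain ⟨ξ, hξt, hξ⟩ := hgrid i hi
  obtain ⟨hk, hN⟩ : k ξ = k₀ ∧ N ξ = N₀ := Prod.mk.inj (hts hξt)
  have hsep := hkN ξ p (hN ▸ hpN)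
  rw [hξ, hk, htcard, Nat.cast_succ] at hsep
  rw [htcard, Nat.cast_succ] at hfi
  exact hfi.not_gt hsep

lemma exists_finset_rat_card_filter_lt {k : ℕ} {r : Fin (k + 1) → ℝ} (hr : StrictMono r) :
    ∃ T : Finset ℚ, ∀ i, #{q ∈ T | ((q : ℚ) : ℝ) < r i} = i := by
  choose q hq using fun j : Fin k => exists_rat_btwn (hr j.castSucc_lt_succ)
  have hq_lt_iff : ∀ i j, (q j : ℝ) < r i ↔ (j : ℕ) < i := fun i j => by
    constructor
    · intro h
      by_contra! hij
      exact (hr.monotone (Fin.le_def.mpr hij)).not_gt ((hq j).1.trans h)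
    · intro hij
      exact (hq j).2.trans_le (hr.monotone (Fin.le_def.mpr hij))
  have hq_mono : StrictMono q := fun a b hab => by
    exact_mod_cast ((hq_lt_iff b.castSucc a).mpr hab).trans (hq b).1
  refine ⟨univ.map ⟨q, hq_mono.injective⟩, fun i => ?_⟩
  simp only [filter_map, card_map, Function.comp_def, Function.Embedding.coeFn_mk, hq_lt_iff,
    Fin.card_filter_val_lt, inf_eq_right]
  omega

/-- The code `p` is read as `(T, m, N) = (ofNat p.1, p.2.1, p.2.2)`; the padding `N` makes every
pair `(T, m)` occur at arbitrarily large `p`. -/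
noncomputable def countingFamily {ι : Type*} (e : ι → ℝ) (ξ : ι) (p : ℕ) : ℝ :=
  #{q ∈ Denumerable.ofNat (Finset ℚ) p.unpair.1 | ((q : ℚ) : ℝ) < e ξ} / p.unpair.2.unpair.1

lemma countingFamily_nonneg {ι : Type*} (e : ι → ℝ) (ξ : ι) (p : ℕ) :
    0 ≤ countingFamily e ξ p := by
  unfold countingFamily; positivity

theorem realizesGrids_countingFamily {ι : Type*} {e : ι → ℝ} (he : Function.Injective e) :
    RealizesGrids (countingFamily e) := by
  intro t N
  rcases hcard : #t with _ | k
  · exact ⟨N, le_rfl, by simp⟩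
  have himage : #(t.image e) = k + 1 := by rw [card_image_of_injective t he, hcard]
  obtain ⟨T, hT⟩ := exists_finset_rat_card_filter_lt ((t.image e).orderEmbOfFin himage).strictMono
  obtain ⟨a, ha⟩ : ∃ a, Denumerable.ofNat (Finset ℚ) a = T := ⟨_, Denumerable.ofNat_encode T⟩
  refine ⟨Nat.pair a (Nat.pair (k + 1) N),
    (Nat.right_le_pair _ _).trans (Nat.right_le_pair _ _), fun i hi => ?_⟩
  obtain ⟨ξ, hξt, hξ⟩ := mem_image.mp (orderEmbOfFin_mem _ himage ⟨i, hi⟩)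
  refine ⟨ξ, hξt, ?_⟩
  simp only [countingFamily, Nat.unpair_pair, ha, hξ, hT]

universe u

theorem mk_Iio_ord_aleph_one :
    Cardinal.mk {o : Ordinal.{u} // o < (Cardinal.aleph 1).ord} = Cardinal.aleph 1 := by
  have := Cardinal.mk_Iio_ordinal (Cardinal.aleph 1).ord
  rwa [Cardinal.card_ord, Cardinal.lift_aleph, Ordinal.lift_one] at this

instance : Uncountable {o : Ordinal.{u} // o < (Cardinal.aleph 1).ord} := by
  rw [← Cardinal.aleph0_lt_mk_iff, mk_Iio_ord_aleph_one]
  exact Cardinal.aleph0_lt_aleph_one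

theorem nonempty_embedding_Iio_ord_aleph_one_real :
    Nonempty ({o : Ordinal.{u} // o < (Cardinal.aleph 1).ord} ↪ ℝ) := by
  rw [← Cardinal.lift_mk_le', mk_Iio_ord_aleph_one, Cardinal.mk_real]
  simpa using Cardinal.aleph_one_le_continuum

/-- `𝔭([0,1]^ω) = ℵ₁`: there is an `ω₁`-indexed family of nonnegative functions on `ℕ`
such that no `f : ℕ → [0,1]` is lim-inf disjoint from all of them, i.e. every such `f`
satisfies `liminf |f n - f_ξ n| = 0` for some `ξ < ω₁`. -/
theorem stmt10 :
    ∃ F : {o : Ordinal // o < (Cardinal.aleph 1).ord} → ℕ → ℝ,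
      (∀ ξ n, 0 ≤ F ξ n) ∧
      ∀ f : ℕ → ℝ, (∀ n, f n ∈ Set.Icc (0 : ℝ) 1) →
        ∃ ξ, liminf (fun n => ((|f n - F ξ n| : ℝ) : EReal)) atTop = 0 := by
  obtain ⟨e⟩ := nonempty_embedding_Iio_ord_aleph_one_real
  exact ⟨countingFamily e, countingFamily_nonneg e, fun f hf =>
    (realizesGrids_countingFamily e.injective).exists_liminf_abs_sub_eq_zero hf⟩
end
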